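/- Let 0 < σ < 1, and let K = #{j : r^W_j < σ} be the number of women with public rating less than σ. Then with probability at least 1 − exp(−σ·n/3) − exp(−σ·n/6) − exp(−σ·n/8): (1/2)·σ·n < K < 2·σ·n, and each of the K lowest-rated men has public rating less than 3σ. -/

import Mathlib

/-!
The number `K` of women rated below `σ` is binomial `Bin(n, σ)`, so the Chernoff bound
`P(X ≥ c) ≤ e^{-tc} 𝔼 e^{tX} ≤ exp(-tc + np(eᵗ - 1))` with `t = ±log 2` controls both
tails of `K`. A man rated at least `3σ` has every man rated below `3σ` strictly below him, so
once `K < 2σn` he is not among the `K` lowest-rated unless the binomial `Bin(n, 3σ)` count of men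
rated below `3σ` is at most `2σn`; its lower tail is bounded with `t = -log (3/2)`, using
`log (3/2) ≤ 5/12`. When `3σ > 1` every rating lies below `3σ` almost surely.
-/

open MeasureTheory

noncomputable section

def unif : Measure ℝ := volume.restrict (Set.Icc (0:ℝ) 1)

def ratingsMeasure (n : ℕ) : Measure ((Fin n → ℝ) × (Fin n → ℝ)) :=
  (Measure.pi fun _ => unif).prod (Measure.pi fun _ => unif)

open ProbabilityTheory Finset Real

section Chernoff

variable {ι α : Type*} [Fintype ι] {s : Set α}

lemma card_filter_mem_eq_sum_indicator [DecidablePred (· ∈ s)] (ω : ι → α) :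
    (#{i | ω i ∈ s} : ℝ) = ∑ i, s.indicator 1 (ω i) := by
  simp [Finset.sum_boole, Set.indicator_apply]

variable [MeasurableSpace α] {μ : Measure α} [IsProbabilityMeasure μ]

lemma integral_exp_mul_indicator_one (hs : MeasurableSet s) (t : ℝ) :
    ∫ x, exp (t * s.indicator 1 x) ∂μ = μ.real s * exp t + (1 - μ.real s) := by
  have : (fun x => exp (t * s.indicator 1 x))
      = fun x => s.indicator (fun _ => exp t - 1) x + 1 := by
    ext x; by_cases hx : x ∈ s <;> simp [hx]
  rw [this, integral_add (integrable_const _ |>.indicator hs) (integrable_const _),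
    integral_indicator_const _ hs]
  simp only [smul_eq_mul, integral_const, probReal_univ, mul_one]
  ring

variable [DecidablePred (· ∈ s)]

lemma mgf_card_filter_mem (hs : MeasurableSet s) (t : ℝ) :
    mgf (fun ω : ι → α => (#{i | ω i ∈ s} : ℝ)) (Measure.pi fun _ => μ) t
      = (μ.real s * exp t + (1 - μ.real s)) ^ Fintype.card ι := by
  simp_rw [mgf, card_filter_mem_eq_sum_indicator, Finset.mul_sum, Real.exp_sum]
  rw [integral_fintype_prod_eq_pow (fun x => exp (t * s.indicator 1 x)),
    integral_exp_mul_indicator_one hs]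

lemma mgf_card_filter_mem_le (hs : MeasurableSet s) (t : ℝ) :
    mgf (fun ω : ι → α => (#{i | ω i ∈ s} : ℝ)) (Measure.pi fun _ => μ) t
      ≤ exp (Fintype.card ι * μ.real s * (exp t - 1)) := by
  have hp : μ.real s ≤ 1 := measureReal_le_one
  have h : μ.real s * exp t + (1 - μ.real s) ≤ exp (μ.real s * (exp t - 1)) := by
    linarith [add_one_le_exp (μ.real s * (exp t - 1))]
  rw [mgf_card_filter_mem hs, mul_assoc, exp_nat_mul]
  exact pow_le_pow_left₀ (by nlinarith [exp_pos t, measureReal_nonneg (μ := μ) (s := s)]) h _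

lemma integrable_exp_mul_card_filter_mem (hs : MeasurableSet s) (t : ℝ) :
    Integrable (fun ω : ι → α => exp (t * #{i | ω i ∈ s})) (Measure.pi fun _ => μ) := by
  simp_rw [card_filter_mem_eq_sum_indicator, Finset.mul_sum, Real.exp_sum]
  refine Integrable.fintype_prod (f := fun _ x => exp (t * s.indicator 1 x))
    fun _ => Integrable.of_bound (C := exp |t|) ?_ ?_
  · exact (measurable_exp.comp ((measurable_const.indicator hs).const_mul t)).aestronglyMeasurable
  · refine ae_of_all _ fun x => ?_
    rw [Real.norm_eq_abs, abs_exp, exp_le_exp]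
    by_cases hx : x ∈ s <;> simp [hx, le_abs_self]

lemma measure_card_filter_mem_ge_le (hs : MeasurableSet s) (c : ℝ) {t : ℝ} (ht : 0 ≤ t) :
    (Measure.pi fun _ => μ) {ω : ι → α | c ≤ #{i | ω i ∈ s}}
      ≤ ENNReal.ofReal (exp (-t * c + Fintype.card ι * μ.real s * (exp t - 1))) := by
  rw [← ofReal_measureReal, exp_add]
  refine ENNReal.ofReal_le_ofReal <| (measure_ge_le_exp_mul_mgf c ht
    (integrable_exp_mul_card_filter_mem hs t)).trans ?_
  exact mul_le_mul_of_nonneg_left (mgf_card_filter_mem_le hs t) (exp_pos _).le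

lemma measure_card_filter_mem_le_le (hs : MeasurableSet s) (c : ℝ) {t : ℝ} (ht : t ≤ 0) :
    (Measure.pi fun _ => μ) {ω : ι → α | (#{i | ω i ∈ s} : ℝ) ≤ c}
      ≤ ENNReal.ofReal (exp (-t * c + Fintype.card ι * μ.real s * (exp t - 1))) := by
  rw [← ofReal_measureReal, exp_add]
  refine ENNReal.ofReal_le_ofReal <| (measure_le_le_exp_mul_mgf c ht
    (integrable_exp_mul_card_filter_mem hs t)).trans ?_
  exact mul_le_mul_of_nonneg_left (mgf_card_filter_mem_le hs t) (exp_pos _).le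

end Chernoff

lemma lt_of_card_filter_lt_lt_card_filter {ι α : Type*} [Fintype ι] [LinearOrder α]
    {ξ : ι → α} {a : ι} {x : α} (h : #{a' | ξ a' < ξ a} < #{a' | ξ a' < x}) : ξ a < x := by
  by_contra! hx
  exact (card_le_card (monotone_filter_right _ fun _ _ h' => h'.trans_le hx)).not_gt h

lemma ofReal_one_sub_sub_sub_le_measure {Ω : Type*} [MeasurableSpace Ω] {μ : Measure Ω}
    [IsProbabilityMeasure μ] {s A B C : Set Ω} {a b c : ℝ} (hsABC : sᶜ ⊆ A ∪ B ∪ C)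
    (ha : μ A ≤ ENNReal.ofReal a) (hb : μ B ≤ ENNReal.ofReal b) (hc : μ C ≤ ENNReal.ofReal c)
    (ha0 : 0 ≤ a) (hb0 : 0 ≤ b) (hc0 : 0 ≤ c) :
    ENNReal.ofReal (1 - a - b - c) ≤ μ s := by
  have hcompl : μ sᶜ ≤ ENNReal.ofReal (a + b + c) := calc
    μ sᶜ ≤ μ A + μ B + μ C := (measure_mono hsABC).trans <|
      (measure_union_le _ _).trans (add_le_add_left (measure_union_le _ _) _)
    _ ≤ ENNReal.ofReal (a + b + c) := by
      rw [ENNReal.ofReal_add (by positivity) hc0, ENNReal.ofReal_add ha0 hb0]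
      gcongr
  rw [sub_sub, sub_sub, ENNReal.ofReal_sub _ (by positivity), ENNReal.ofReal_one,
    tsub_le_iff_right, ← measure_univ (μ := μ), ← add_assoc]
  exact (measure_univ_le_add_compl s).trans (add_le_add_right hcompl _)

instance : IsProbabilityMeasure unif :=
  ⟨by simp [unif]⟩

lemma unif_real_Iio {b : ℝ} (hb0 : 0 ≤ b) (hb1 : b ≤ 1) : unif.real (Set.Iio b) = b := by
  have : Set.Iio b ∩ Set.Icc 0 1 = Set.Ico 0 b := by
    ext x; simp only [Set.mem_inter_iff, Set.mem_Iio, Set.mem_Icc, Set.mem_Ico]; grind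
  rw [measureReal_def, unif, Measure.restrict_apply measurableSet_Iio, this]
  simp [hb0]

lemma unif_Ici_eq_zero {x : ℝ} (hx : 1 < x) : unif (Set.Ici x) = 0 := by
  have : Set.Ici x ∩ Set.Icc 0 1 = ∅ := by
    ext y; simp only [Set.mem_inter_iff, Set.mem_Ici, Set.mem_Icc]; grind
  rw [unif, Measure.restrict_apply measurableSet_Ici, this, measure_empty]

lemma log_three_halves_le : log (3 / 2) ≤ 5 / 12 := by
  rw [log_le_iff_le_exp (by norm_num)]
  exact le_trans (by norm_num) (quadratic_le_exp_of_nonneg (by norm_num : (0 : ℝ) ≤ 5 / 12))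

section Ratings

variable {n : ℕ} {σ : ℝ}

lemma pi_unif_two_mul_le_card_le (hσ0 : 0 < σ) (hσ1 : σ ≤ 1) :
    (Measure.pi fun _ : Fin n => unif) {η | 2 * σ * n ≤ (#{j | η j < σ} : ℝ)}
      ≤ ENNReal.ofReal (exp (-σ * n / 3)) := by
  refine (measure_card_filter_mem_ge_le measurableSet_Iio _ (log_nonneg one_le_two)).trans ?_
  rw [Fintype.card_fin, unif_real_Iio hσ0.le hσ1, exp_log two_pos]
  have : 0 ≤ σ * n := by positivity
  gcongr
  nlinarith [log_two_gt_d9]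

lemma pi_unif_card_le_half_mul_le (hσ0 : 0 < σ) (hσ1 : σ ≤ 1) :
    (Measure.pi fun _ : Fin n => unif) {η | (#{j | η j < σ} : ℝ) ≤ 1 / 2 * σ * n}
      ≤ ENNReal.ofReal (exp (-σ * n / 8)) := by
  refine (measure_card_filter_mem_le_le measurableSet_Iio _
    (neg_nonpos.2 (log_nonneg one_le_two))).trans ?_
  rw [Fintype.card_fin, unif_real_Iio hσ0.le hσ1, exp_neg, exp_log two_pos]
  have : 0 ≤ σ * n := by positivity
  gcongr
  nlinarith [log_two_lt_d9]

lemma pi_unif_card_le_and_exists_le (hσ0 : 0 < σ) :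
    (Measure.pi fun _ : Fin n => unif)
        {ξ | (#{a | ξ a < 3 * σ} : ℝ) ≤ 2 * σ * n ∧ ∃ a, 3 * σ ≤ ξ a}
      ≤ ENNReal.ofReal (exp (-σ * n / 6)) := by
  rcases le_or_gt (3 * σ) 1 with hσ3 | hσ3
  · refine (measure_mono fun ξ hξ => hξ.1).trans <| (measure_card_filter_mem_le_le
      measurableSet_Iio _ (neg_nonpos.2 (log_nonneg (by norm_num : (1 : ℝ) ≤ 3 / 2)))).trans ?_
    rw [Fintype.card_fin, unif_real_Iio (by positivity) hσ3, exp_neg, exp_log (by norm_num)]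
    have : 0 ≤ σ * n := by positivity
    gcongr
    nlinarith [log_three_halves_le]
  · have hnull : (Measure.pi fun _ : Fin n => unif) {ξ | ∃ a, 3 * σ ≤ ξ a} = 0 := by
      simp only [Set.ofPred_exists]
      exact measure_iUnion_null fun a => Measure.pi_eval_preimage_null _ (unif_Ici_eq_zero hσ3)
    exact (measure_mono_null (fun ξ hξ => hξ.2) hnull).trans_le zero_le

end Ratings

instance (n : ℕ) : IsProbabilityMeasure (ratingsMeasure n) := by
  rw [ratingsMeasure]; infer_instance

lemma ratingsMeasure_preimage_fst (n : ℕ) (T : Set (Fin n → ℝ)) :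
    ratingsMeasure n (Prod.fst ⁻¹' T) = (Measure.pi fun _ => unif) T := by
  rw [← Set.prod_univ, ratingsMeasure, Measure.prod_prod, measure_univ, mul_one]

lemma ratingsMeasure_preimage_snd (n : ℕ) (T : Set (Fin n → ℝ)) :
    ratingsMeasure n (Prod.snd ⁻¹' T) = (Measure.pi fun _ => unif) T := by
  rw [← Set.univ_prod, ratingsMeasure, Measure.prod_prod, measure_univ, one_mul]

/-- `ω.1` are the men's ratings and `ω.2` the women's; the `K` lowest-rated men are those with
fewer than `K` men strictly below them. -/
theorem stmt19 (n : ℕ) (σ : ℝ) (hσ0 : 0 < σ) (hσ1 : σ < 1) :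
    ENNReal.ofReal
        (1 - Real.exp (-σ*n/3) - Real.exp (-σ*n/6) - Real.exp (-σ*n/8)) ≤
    ratingsMeasure n {ω |
      ((1/2)*σ*n < ((Finset.univ.filter fun j => ω.2 j < σ).card : ℝ) ∧
        ((Finset.univ.filter fun j => ω.2 j < σ).card : ℝ) < 2*σ*n) ∧
      ∀ a : Fin n,
        (Finset.univ.filter fun a' => ω.1 a' < ω.1 a).card <
          (Finset.univ.filter fun j => ω.2 j < σ).card →
        ω.1 a < 3*σ} := by
  refine ofReal_one_sub_sub_sub_le_measure ?_
    ((ratingsMeasure_preimage_snd n _).trans_le (pi_unif_two_mul_le_card_le hσ0 hσ1.le))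
    ((ratingsMeasure_preimage_fst n _).trans_le (pi_unif_card_le_and_exists_le hσ0))
    ((ratingsMeasure_preimage_snd n _).trans_le (pi_unif_card_le_half_mul_le hσ0 hσ1.le))
    (exp_pos _).le (exp_pos _).le (exp_pos _).le
  intro ω hω
  by_contra! hgood
  simp only [Set.mem_union, Set.mem_preimage, Set.mem_ofPred_eq, not_or, not_and, not_exists,
    not_le] at hgood
  obtain ⟨⟨hK_lt, hmen⟩, hK_gt⟩ := hgood
  refine hω ⟨⟨hK_gt, hK_lt⟩, fun a ha => ?_⟩
  by_cases hM : 2 * σ * n < (#{a | ω.1 a < 3 * σ} : ℝ)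
  · exact lt_of_card_filter_lt_lt_card_filter (ha.trans (by exact_mod_cast hK_lt.trans hM))
  · exact hmen (not_lt.1 hM) a

end
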